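/- Let a ∈ 𝒜, ξ ∈ ℝ with |ξ| ≥ 1, and let f : ℝ → ℂ be 1-periodic and continuously differentiable with f' absolutely continuous and f'' = a g a.e. for some bounded measurable g. Let u be a periodic W^{2,1} function with −u'' + iξ a u = a f a.e., and set k(x) := u(x) − f(x)/(1 + iξ). Then there is a constant C, independent of a, ξ, f and g, such that ‖k‖_{H¹} ≤ C |ξ|^{−3/2} [f + g]_a. Moreover, if in addition ∫ a f = 0, then ‖k‖_∞ ≤ 2 [f + g]_a. -/

import Mathlib

/-!
With `c = 1 + iξ`, the function `k = u - f / c` solves `k'' = a (iξ k - (f + g) / c)`. Testing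
this equation against `k̄` and integrating by parts over a period gives the energy identity
`‖k'‖₂² + iξ [k]_a² = ∫ a k̄ (f + g) / c`. Its imaginary part and Cauchy–Schwarz in `L²(a)` give
`[k]_a ≤ |ξ|⁻² [f + g]_a`, and then its real part gives `‖k'‖₂ ≤ |ξ|^{-3/2} [f + g]_a`.
Since `a` is a probability density, `|k|` is at most `[k]_a` somewhere, and `‖k'‖₁ ≤ ‖k'‖₂`
bounds the oscillation of `k`; hence `‖k‖_∞ ≤ 2 |ξ|^{-3/2} [f + g]_a`, which gives both bounds.
-/

open MeasureTheory Set Complex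

noncomputable section

/-- `a ∈ 𝒜`: a measurable 1-periodic function (a function on the torus `𝕋`),
nonnegative a.e., integrable over one period, with `∫ a = 1`. -/
def MemA (a : ℝ → ℝ) : Prop :=
  Measurable a ∧ (∀ x, a (x + 1) = a x) ∧ (∀ᵐ x : ℝ, 0 ≤ a x) ∧
    IntegrableOn a (Ioc 0 1) ∧ (∫ x in Ioc (0:ℝ) 1, a x) = 1

/-- A periodic `W^{2,1}` function: a 1-periodic continuously differentiable
`u : ℝ → ℂ` whose derivative is absolutely continuous with (periodic) second
derivative `u'' ∈ L¹(𝕋)`. -/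
def IsPeriodicW21 (u u'' : ℝ → ℂ) : Prop :=
  (∀ x, u (x + 1) = u x) ∧ (∀ x, u'' (x + 1) = u'' x) ∧
  ContDiff ℝ 1 u ∧
  (∀ x, deriv u x = deriv u 0 + ∫ t in (0:ℝ)..x, u'' t) ∧
  IntegrableOn u'' (Ioc 0 1)

/-- The seminorm `[h]_a = (∫ a |h|²)^{1/2}`. -/
def seminormA (a : ℝ → ℝ) (h : ℝ → ℂ) : ℝ :=
  Real.sqrt (∫ x in Ioc (0:ℝ) 1, a x * ‖h x‖ ^ 2)

open ComplexConjugate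

theorem integral_mul_le_sqrt_mul_sqrt {α : Type*} [MeasurableSpace α] {μ : Measure α}
    {p q : α → ℝ} (hp : 0 ≤ᵐ[μ] p) (hq : 0 ≤ᵐ[μ] q) (hp2 : MemLp p 2 μ) (hq2 : MemLp q 2 μ) :
    ∫ x, p x * q x ∂μ ≤ √(∫ x, p x ^ 2 ∂μ) * √(∫ x, q x ^ 2 ∂μ) := by
  have := integral_mul_le_Lp_mul_Lq_of_nonneg Real.HolderConjugate.two_two hp hq
    (by simpa using hp2) (by simpa using hq2)
  simpa only [Real.rpow_two, Real.sqrt_eq_rpow] using this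

theorem integral_Ioc_zero_one_le_sqrt {w : ℝ → ℝ} (hw : Continuous w) (hw0 : ∀ x, 0 ≤ w x) :
    ∫ x in Ioc (0:ℝ) 1, w x ≤ √(∫ x in Ioc (0:ℝ) 1, w x ^ 2) := by
  have hmem : ∀ v : ℝ → ℝ, Continuous v → MemLp v 2 (volume.restrict (Ioc (0:ℝ) 1)) :=
    fun v hv => (memLp_two_iff_integrable_sq hv.aestronglyMeasurable).2 (hv.pow 2).integrableOn_Ioc
  simpa using integral_mul_le_sqrt_mul_sqrt (ae_of_all _ hw0) (ae_of_all _ fun _ => zero_le_one)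
    (hmem w hw) (hmem _ continuous_const)

theorem intervalIntegral.integral_primitive_mul_eq {𝕜 : Type*} [RCLike 𝕜] {a b : ℝ}
    (hab : a ≤ b) {f g : ℝ → 𝕜} (hf : IntervalIntegrable f volume a b)
    (hg : IntervalIntegrable g volume a b) :
    ∫ x in a..b, (∫ t in a..x, f t) * g x = ∫ t in a..b, f t * ∫ x in t..b, g x := by
  let F : ℝ → ℝ → 𝕜 := fun x t => if t ≤ x then f t * g x else 0
  have hF : Integrable (Function.uncurry F)
      ((volume.restrict (Ioc a b)).prod (volume.restrict (Ioc a b))) := by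
    have : Function.uncurry F = {p : ℝ × ℝ | p.2 ≤ p.1}.indicator (fun p => g p.1 * f p.2) := by
      ext ⟨x, t⟩; simp [F, Set.indicator_apply, mul_comm]
    rw [this]
    exact ((hg.1.mul_prod hf.1).indicator
      (measurableSet_le measurable_snd measurable_fst))
  have hx : ∀ x ∈ Ioc a b, ∫ t in Ioc a b, F x t = (∫ t in a..x, f t) * g x := by
    intro x hx
    have : (fun t => F x t) = (Iic x).indicator (fun t => f t * g x) := by
      ext t; simp [F, Set.indicator_apply]
    rw [this, setIntegral_indicator measurableSet_Iic, Ioc_inter_Iic, min_eq_right hx.2,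
      MeasureTheory.integral_mul_const, intervalIntegral.integral_of_le hx.1.le]
  have ht : ∀ t ∈ Ioc a b, ∫ x in Ioc a b, F x t = f t * ∫ x in t..b, g x := by
    intro t ht
    have : (fun x => F x t) = (Ici t).indicator (fun x => f t * g x) := by
      ext x; simp [F, Set.indicator_apply]
    have hI : Ioc a b ∩ Ici t = Icc t b := by
      ext x; simp only [mem_inter_iff, mem_Ioc, mem_Ici, mem_Icc]
      constructor
      · rintro ⟨⟨-, h⟩, h'⟩; exact ⟨h', h⟩
      · rintro ⟨h', h⟩; exact ⟨⟨ht.1.trans_le h', h⟩, h'⟩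
    rw [this, setIntegral_indicator measurableSet_Ici, hI, integral_Icc_eq_integral_Ioc,
      MeasureTheory.integral_const_mul, intervalIntegral.integral_of_le ht.2]
  rw [intervalIntegral.integral_of_le hab, intervalIntegral.integral_of_le hab,
    ← setIntegral_congr_fun measurableSet_Ioc hx, ← setIntegral_congr_fun measurableSet_Ioc ht]
  exact integral_integral_swap hF

theorem intervalIntegral.continuousOn_of_eq_primitive {E : Type*} [NormedAddCommGroup E]
    [NormedSpace ℝ E] {a b : ℝ} (hab : a ≤ b) {v v' : ℝ → E}
    (hv' : IntervalIntegrable v' volume a b) (hv : ∀ x ∈ Icc a b, v x = v a + ∫ t in a..x, v' t) :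
    ContinuousOn v (uIcc a b) := by
  rw [uIcc_of_le hab]
  refine ContinuousOn.congr ?_ hv
  refine continuousOn_const.add ?_
  simpa [uIcc_of_le hab] using continuousOn_primitive_interval' hv' left_mem_uIcc

theorem intervalIntegral.integral_mul_eq_sub_of_eq_primitive {𝕜 : Type*} [RCLike 𝕜] {a b : ℝ}
    (hab : a ≤ b) {u u' v v' : ℝ → 𝕜} (hu' : IntervalIntegrable u' volume a b)
    (hv' : IntervalIntegrable v' volume a b) (hu : ∀ x ∈ Icc a b, u x = u a + ∫ t in a..x, u' t)
    (hv : ∀ x ∈ Icc a b, v x = v a + ∫ t in a..x, v' t) :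
    ∫ x in a..b, u x * v' x = u b * v b - u a * v a - ∫ x in a..b, u' x * v x := by
  have hU : IntervalIntegrable (fun x => (∫ t in a..x, u' t) * v' x) volume a b :=
    hv'.continuousOn_mul (continuousOn_of_eq_primitive hab hu' fun x _ => by simp)
  have hV : IntervalIntegrable (fun x => u' x * v x) volume a b :=
    hu'.mul_continuousOn (continuousOn_of_eq_primitive hab hv' hv)
  have hvb : ∀ t ∈ uIcc a b, ∫ x in t..b, v' x = v b - v t := by
    intro t ht
    rw [uIcc_of_le hab] at ht
    rw [hv b (right_mem_Icc.2 hab), hv t ht, add_sub_add_left_eq_sub,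
      integral_interval_sub_left hv' (hv'.mono_set (by
        rw [uIcc_of_le hab, uIcc_of_le ht.1]; exact Icc_subset_Icc_right ht.2))]
  calc ∫ x in a..b, u x * v' x
      = ∫ x in a..b, (u a * v' x + (∫ t in a..x, u' t) * v' x) := by
        refine integral_congr fun x hx => ?_
        rw [uIcc_of_le hab] at hx
        simp only [hu x hx, add_mul]
    _ = u a * (v b - v a) + ∫ t in a..b, u' t * ∫ x in t..b, v' x := by
        rw [integral_add (hv'.const_mul _) hU, integral_const_mul,
          integral_primitive_mul_eq hab hu' hv', hvb a left_mem_uIcc]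
    _ = u a * (v b - v a) + ∫ t in a..b, (v b * u' t - u' t * v t) := by
        congr 1
        refine integral_congr fun t ht => ?_
        simp only [hvb t ht, mul_sub, mul_comm]
    _ = u b * v b - u a * v a - ∫ x in a..b, u' x * v x := by
        rw [integral_sub (hu'.const_mul _) hV, integral_const_mul,
          ← sub_eq_iff_eq_add'.2 (hu b (right_mem_Icc.2 hab))]
        ring

theorem Function.Periodic.deriv {E : Type*} [NormedAddCommGroup E] [NormedSpace ℝ E]
    {v : ℝ → E} {c : ℝ} (hv : Function.Periodic v c) : Function.Periodic (_root_.deriv v) c := by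
  intro x
  rw [← deriv_comp_add_const, show (fun y => v (y + c)) = v from funext hv]

theorem norm_le_norm_add_integral_norm_deriv_of_periodic {E : Type*}
    [NormedAddCommGroup E] [NormedSpace ℝ E] [CompleteSpace E] {v : ℝ → E}
    (hv : ContDiff ℝ 1 v) (hper : Function.Periodic v 1) (x y : ℝ) :
    ‖v x‖ ≤ ‖v y‖ + ∫ t in Ioc (0:ℝ) 1, ‖deriv v t‖ := by
  have hv' : Continuous (deriv v) := hv.continuous_deriv le_rfl
  set x' : ℝ := x + ⌈y - x⌉ with hx'
  have hyx' : y ≤ x' := by linarith [Int.le_ceil (y - x)]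
  have hx'y : x' ≤ y + 1 := by linarith [Int.ceil_lt_add_one (y - x)]
  have hvx : v x' = v x := by simpa using hper.int_mul ⌈y - x⌉ x
  have hftc : v x' = v y + ∫ t in y..x', deriv v t := by
    rw [intervalIntegral.integral_deriv_eq_sub
      (fun t _ => (hv.differentiable one_ne_zero) t) (hv'.intervalIntegrable _ _)]
    abel
  calc ‖v x‖ = ‖v y + ∫ t in y..x', deriv v t‖ := by rw [← hftc, hvx]
    _ ≤ ‖v y‖ + ∫ t in y..x', ‖deriv v t‖ :=
        (norm_add_le _ _).trans (add_le_add_right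
          (intervalIntegral.norm_integral_le_integral_norm hyx') _)
    _ ≤ ‖v y‖ + ∫ t in y..y + 1, ‖deriv v t‖ := by
        gcongr
        exact intervalIntegral.integral_mono_interval le_rfl hyx' hx'y
          (ae_of_all _ fun _ => norm_nonneg _) (hv'.norm.intervalIntegrable _ _)
    _ = ‖v y‖ + ∫ t in Ioc (0:ℝ) 1, ‖deriv v t‖ := by
        have hp : Function.Periodic (fun t => ‖deriv v t‖) 1 := fun t => by
          simp only [hper.deriv t]
        rw [hp.intervalIntegral_add_eq y 0, zero_add,
          intervalIntegral.integral_of_le zero_le_one]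

theorem seminormA_nonneg (a : ℝ → ℝ) (h : ℝ → ℂ) : 0 ≤ seminormA a h := Real.sqrt_nonneg _

theorem MemA.exists_norm_le_seminormA {a : ℝ → ℝ} (ha : MemA a) {v : ℝ → ℂ}
    (hv : Continuous v) : ∃ y, ‖v y‖ ≤ seminormA a v := by
  obtain ⟨-, -, ha0, hai, ha1⟩ := ha
  obtain ⟨y, -, hy⟩ := isCompact_Icc.exists_isMinOn
    (nonempty_Icc.mpr zero_le_one) (hv.norm.continuousOn (s := Icc (0:ℝ) 1))
  refine ⟨y, Real.le_sqrt_of_sq_le ?_⟩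
  calc ‖v y‖ ^ 2 = ∫ x in Ioc (0:ℝ) 1, a x * ‖v y‖ ^ 2 := by
        rw [integral_mul_const, ha1, one_mul]
    _ ≤ ∫ x in Ioc (0:ℝ) 1, a x * ‖v x‖ ^ 2 := by
        refine integral_mono_ae (hai.mul_const _)
          (hai.mul_continuousOn_of_subset (hv.norm.pow 2).continuousOn measurableSet_Ioc
            isCompact_Icc Ioc_subset_Icc_self) ?_
        filter_upwards [ae_restrict_of_ae ha0, ae_restrict_mem measurableSet_Ioc] with x hx hxs
        exact mul_le_mul_of_nonneg_left
          (pow_le_pow_left₀ (norm_nonneg _) (hy (Ioc_subset_Icc_self hxs)) 2) hx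

theorem norm_integral_mul_conj_le_seminormA {a : ℝ → ℝ} (ha : MemA a) {k h : ℝ → ℂ} {M N : ℝ}
    (hk : AEStronglyMeasurable k (volume.restrict (Ioc 0 1))) (hkb : ∀ x, ‖k x‖ ≤ M)
    (hh : AEStronglyMeasurable h (volume.restrict (Ioc 0 1))) (hhb : ∀ x, ‖h x‖ ≤ N) :
    ‖∫ x in Ioc (0:ℝ) 1, a x * (conj (k x) * h x)‖ ≤ seminormA a k * seminormA a h := by
  obtain ⟨ham, -, ha0, hai, -⟩ := ha
  have ha0' : ∀ᵐ x ∂(volume.restrict (Ioc (0:ℝ) 1)), 0 ≤ a x := ae_restrict_of_ae ha0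
  have hmem : ∀ w : ℝ → ℂ, ∀ L, AEStronglyMeasurable w (volume.restrict (Ioc 0 1)) →
      (∀ x, ‖w x‖ ≤ L) → MemLp (fun x => √(a x) * ‖w x‖) 2 (volume.restrict (Ioc 0 1)) := by
    intro w L hw hwb
    refine (memLp_two_iff_integrable_sq (ham.sqrt.aestronglyMeasurable.mul hw.norm)).2 ?_
    refine (hai.mul_bdd (c := L ^ 2) (hw.norm.pow 2) (ae_of_all _ fun x => ?_)).congr ?_
    · simp only [Pi.pow_apply, norm_pow, norm_norm]
      exact pow_le_pow_left₀ (norm_nonneg _) (hwb x) 2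
    · filter_upwards [ha0'] with x hx
      simp [mul_pow, Real.sq_sqrt hx]
  have hsq : ∀ w : ℝ → ℂ, ∫ x in Ioc (0:ℝ) 1, (√(a x) * ‖w x‖) ^ 2
      = ∫ x in Ioc (0:ℝ) 1, a x * ‖w x‖ ^ 2 := fun w => by
    refine integral_congr_ae ?_
    filter_upwards [ha0'] with x hx
    rw [mul_pow, Real.sq_sqrt hx]
  calc ‖∫ x in Ioc (0:ℝ) 1, a x * (conj (k x) * h x)‖
      ≤ ∫ x in Ioc (0:ℝ) 1, √(a x) * ‖k x‖ * (√(a x) * ‖h x‖) := by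
        refine (norm_integral_le_integral_norm _).trans_eq (integral_congr_ae ?_)
        filter_upwards [ha0'] with x hx
        rw [norm_mul, norm_mul, Complex.norm_conj, Complex.norm_real, Real.norm_of_nonneg hx,
          mul_mul_mul_comm, Real.mul_self_sqrt hx]
    _ ≤ seminormA a k * seminormA a h := by
        have := integral_mul_le_sqrt_mul_sqrt (ae_of_all _ fun x => by positivity)
          (ae_of_all _ fun x => by positivity) (hmem k M hk hkb) (hmem h N hh hhb)
        rwa [hsq, hsq] at this

namespace IsPeriodicW21

variable {u u'' v v'' : ℝ → ℂ}

theorem periodic (hu : IsPeriodicW21 u u'') : Function.Periodic u 1 := hu.1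

theorem periodic_snd_deriv (hu : IsPeriodicW21 u u'') : Function.Periodic u'' 1 := hu.2.1

theorem contDiff (hu : IsPeriodicW21 u u'') : ContDiff ℝ 1 u := hu.2.2.1

theorem deriv_eq (hu : IsPeriodicW21 u u'') (x : ℝ) :
    deriv u x = deriv u 0 + ∫ t in (0:ℝ)..x, u'' t := hu.2.2.2.1 x

theorem integrableOn_snd_deriv (hu : IsPeriodicW21 u u'') : IntegrableOn u'' (Ioc 0 1) :=
  hu.2.2.2.2

theorem intervalIntegrable (hu : IsPeriodicW21 u u'') (x y : ℝ) :
    IntervalIntegrable u'' volume x y :=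
  Function.Periodic.intervalIntegrable₀ hu.periodic_snd_deriv one_ne_zero
    ((intervalIntegrable_iff_integrableOn_Ioc_of_le zero_le_one).2 hu.integrableOn_snd_deriv) x y

theorem hasDerivAt (hu : IsPeriodicW21 u u'') (x : ℝ) : HasDerivAt u (deriv u x) x :=
  ((hu.contDiff.differentiable one_ne_zero) x).hasDerivAt

theorem sub (hu : IsPeriodicW21 u u'') (hv : IsPeriodicW21 v v'') :
    IsPeriodicW21 (fun x => u x - v x) (fun x => u'' x - v'' x) := by
  refine ⟨fun x => by simp only [hu.periodic x, hv.periodic x], fun x => by simp only [hu.periodic_snd_deriv x, hv.periodic_snd_deriv x],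
    hu.contDiff.sub hv.contDiff, fun x => ?_, hu.integrableOn_snd_deriv.sub hv.integrableOn_snd_deriv⟩
  rw [((hu.hasDerivAt x).fun_sub (hv.hasDerivAt x)).deriv,
    ((hu.hasDerivAt 0).fun_sub (hv.hasDerivAt 0)).deriv,
    intervalIntegral.integral_sub (hu.intervalIntegrable 0 x) (hv.intervalIntegrable 0 x),
    hu.deriv_eq x, hv.deriv_eq x]
  ring

theorem div_const (hu : IsPeriodicW21 u u'') (c : ℂ) :
    IsPeriodicW21 (fun x => u x / c) (fun x => u'' x / c) := by
  refine ⟨fun x => by simp only [hu.periodic x], fun x => by simp only [hu.periodic_snd_deriv x],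
    hu.contDiff.div_const c, fun x => ?_, hu.integrableOn_snd_deriv.div_const c⟩
  rw [((hu.hasDerivAt x).div_const c).deriv, ((hu.hasDerivAt 0).div_const c).deriv,
    intervalIntegral.integral_div, hu.deriv_eq x, add_div]

theorem integral_conj_mul (hu : IsPeriodicW21 u u'') :
    ∫ x in Ioc (0:ℝ) 1, conj (u x) * u'' x = -((∫ x in Ioc (0:ℝ) 1, ‖deriv u x‖ ^ 2 : ℝ) : ℂ) := by
  have hu' : Continuous (deriv u) := hu.contDiff.continuous_deriv le_rfl
  have hconj : ∀ x ∈ Icc (0:ℝ) 1,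
      conj (u x) = conj (u 0) + ∫ t in (0:ℝ)..x, conj (deriv u t) := fun x _ => by
    simp only [starRingEnd_apply]
    rw [intervalIntegral.integral_eq_sub_of_hasDerivAt (fun t _ => (hu.hasDerivAt t).star)
      (hu'.star.intervalIntegrable _ _)]
    simp
  have hperiod : ∀ w : ℝ → ℂ, Function.Periodic w 1 → w 1 = w 0 := fun w hw => by
    simpa using hw 0
  rw [← intervalIntegral.integral_of_le zero_le_one,
    intervalIntegral.integral_mul_eq_sub_of_eq_primitive zero_le_one
      (hu'.star.intervalIntegrable _ _) (hu.intervalIntegrable 0 1) hconj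
      (fun x _ => hu.deriv_eq x),
    hperiod u hu.periodic, hperiod (deriv u) (hu.periodic.deriv), sub_self, zero_sub,
    intervalIntegral.integral_of_le zero_le_one, ← integral_complex_ofReal]
  simp only [← starRingEnd_apply, Complex.conj_mul', Complex.ofReal_pow]

theorem exists_bound (hu : IsPeriodicW21 u u'') :
    ∃ M, ∀ x, ‖u x‖ ≤ M := by
  obtain ⟨M, hM⟩ := (Function.Periodic.isBounded_of_continuous hu.periodic one_ne_zero
    hu.contDiff.continuous).exists_norm_le
  exact ⟨M, fun x => hM _ (mem_range_self x)⟩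

theorem energy_identity {a : ℝ → ℝ} (ha : MemA a) {k k'' w : ℝ → ℂ} {ξ M : ℝ}
    (hk : IsPeriodicW21 k k'') (hw : AEStronglyMeasurable w (volume.restrict (Ioc 0 1)))
    (hwb : ∀ x, ‖w x‖ ≤ M) (hode : ∀ᵐ x, k'' x = a x * (ξ * I * k x - w x)) :
    ((∫ x in Ioc (0:ℝ) 1, ‖deriv k x‖ ^ 2 : ℝ) : ℂ) + ξ * I * ((seminormA a k ^ 2 : ℝ) : ℂ)
      = ∫ x in Ioc (0:ℝ) 1, a x * (conj (k x) * w x) := by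
  obtain ⟨-, -, ha0, hai, -⟩ := ha
  obtain ⟨N, hN⟩ := hk.exists_bound
  have hkc : Continuous k := hk.contDiff.continuous
  have hB : IntegrableOn (fun x => a x * ‖k x‖ ^ 2) (Ioc 0 1) :=
    hai.mul_continuousOn_of_subset (hkc.norm.pow 2).continuousOn measurableSet_Ioc
      isCompact_Icc Ioc_subset_Icc_self
  have hD : IntegrableOn (fun x => (a x : ℂ) * (conj (k x) * w x)) (Ioc 0 1) :=
    hai.ofReal.mul_bdd (hkc.star.aestronglyMeasurable.restrict.mul hw)
      (ae_of_all _ fun x => by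
        rw [norm_mul, Complex.norm_conj]
        exact mul_le_mul (hN x) (hwb x) (norm_nonneg _) ((norm_nonneg _).trans (hN x)))
  have hseminorm : seminormA a k ^ 2 = ∫ x in Ioc (0:ℝ) 1, a x * ‖k x‖ ^ 2 :=
    Real.sq_sqrt (setIntegral_nonneg_ae measurableSet_Ioc (by
      filter_upwards [ha0] with x hx _; positivity))
  have hsplit : ∫ x in Ioc (0:ℝ) 1, conj (k x) * k'' x
      = ξ * I * (∫ x in Ioc (0:ℝ) 1, ((a x * ‖k x‖ ^ 2 : ℝ) : ℂ))
        - ∫ x in Ioc (0:ℝ) 1, a x * (conj (k x) * w x) := by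
    rw [← integral_const_mul, ← integral_sub (by exact hB.ofReal.const_mul _) hD]
    refine setIntegral_congr_ae measurableSet_Ioc ?_
    filter_upwards [hode] with x hx _
    rw [hx]
    push_cast
    rw [← Complex.conj_mul']
    ring
  rw [hk.integral_conj_mul, integral_complex_ofReal, ← hseminorm] at hsplit
  linear_combination -hsplit

end IsPeriodicW21

theorem MemA.norm_le_seminormA_add_sqrt {a : ℝ → ℝ} (ha : MemA a) {v v'' : ℝ → ℂ}
    (hv : IsPeriodicW21 v v'') (x : ℝ) :
    ‖v x‖ ≤ seminormA a v + √(∫ t in Ioc (0:ℝ) 1, ‖deriv v t‖ ^ 2) := by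
  obtain ⟨y, hy⟩ := ha.exists_norm_le_seminormA hv.contDiff.continuous
  calc ‖v x‖ ≤ ‖v y‖ + ∫ t in Ioc (0:ℝ) 1, ‖deriv v t‖ :=
        norm_le_norm_add_integral_norm_deriv_of_periodic hv.contDiff hv.periodic x y
    _ ≤ _ := add_le_add hy (integral_Ioc_zero_one_le_sqrt
        (hv.contDiff.continuous_deriv le_rfl).norm fun _ => norm_nonneg _)

theorem bounds_of_norm_energy_le {A β η ξ : ℝ} (hβ : 0 ≤ β) (hη : 0 ≤ η) (hξ : 1 ≤ |ξ|)
    (h : ‖(A : ℂ) + ξ * I * ((β ^ 2 : ℝ) : ℂ)‖ * |ξ| ≤ η * β) :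
    β ≤ η * |ξ| ^ (-(3/2 : ℝ)) ∧ √A ≤ η * |ξ| ^ (-(3/2 : ℝ)) := by
  set z : ℂ := A + ξ * I * ((β ^ 2 : ℝ) : ℂ)
  set τ := |ξ| ^ (-(3/2 : ℝ))
  have hξ0 : 0 < |ξ| := one_pos.trans_le hξ
  have hτ : 0 ≤ τ := by positivity
  have hτ3 : τ ^ 2 * |ξ| ^ 3 = 1 := by
    rw [← Real.rpow_natCast, ← Real.rpow_natCast, ← Real.rpow_mul hξ0.le, ← Real.rpow_add hξ0]
    norm_num
  have hτ2 : 1 ≤ τ * |ξ| ^ 2 := by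
    rw [← Real.rpow_natCast, ← Real.rpow_add hξ0]
    exact Real.one_le_rpow hξ (by norm_num)
  have hre : A ≤ ‖z‖ := by
    simpa [z, -Complex.ofReal_pow] using Complex.re_le_norm z
  have him : |ξ| * β ^ 2 ≤ ‖z‖ := by
    simpa [z, -Complex.ofReal_pow, abs_mul, abs_of_nonneg (sq_nonneg β)]
      using Complex.abs_im_le_norm z
  have hβξ : |ξ| ^ 2 * β ≤ η := by
    rcases hβ.eq_or_lt with rfl | hβ0
    · simpa using hη
    · refine le_of_mul_le_mul_right ?_ hβ0
      nlinarith
  have hAξ : A * |ξ| ^ 3 ≤ η ^ 2 := by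
    nlinarith [mul_le_mul_of_nonneg_right hre hξ0.le]
  refine ⟨by nlinarith, Real.sqrt_le_iff.2 ⟨by positivity, ?_⟩⟩
  calc A = A * |ξ| ^ 3 * τ ^ 2 := by rw [mul_assoc, mul_comm (|ξ| ^ 3), hτ3, mul_one]
    _ ≤ η ^ 2 * τ ^ 2 := by gcongr
    _ = (η * τ) ^ 2 := by ring

theorem IsPeriodicW21.sqrt_integral_deriv_sq_le_and_norm_le {a : ℝ → ℝ} (ha : MemA a)
    {k k'' h : ℝ → ℂ} {ξ M : ℝ} {c : ℂ} (hξ : 1 ≤ |ξ|) (hc : |ξ| ≤ ‖c‖)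
    (hk : IsPeriodicW21 k k'') (hh : Measurable h) (hhb : ∀ x, ‖h x‖ ≤ M)
    (hode : ∀ᵐ x, k'' x = a x * (ξ * I * k x - h x / c)) :
    √(∫ x in Ioc (0:ℝ) 1, ‖deriv k x‖ ^ 2) ≤ seminormA a h * |ξ| ^ (-(3/2 : ℝ)) ∧
      ∀ x, ‖k x‖ ≤ 2 * (seminormA a h * |ξ| ^ (-(3/2 : ℝ))) := by
  have hc0 : 0 < ‖c‖ := (one_pos.trans_le hξ).trans_le hc
  obtain ⟨N, hN⟩ := hk.exists_bound
  have henergy := hk.energy_identity ha (hh.div_const c).aestronglyMeasurable (fun x => by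
    rw [norm_div]; exact div_le_div_of_nonneg_right (hhb x) (norm_nonneg c)) hode
  have hdiv : ∫ x in Ioc (0:ℝ) 1, (a x : ℂ) * (conj (k x) * (h x / c))
      = (∫ x in Ioc (0:ℝ) 1, (a x : ℂ) * (conj (k x) * h x)) / c := by
    rw [← integral_div]
    simp only [mul_div_assoc]
  have hD : ‖((∫ x in Ioc (0:ℝ) 1, ‖deriv k x‖ ^ 2 : ℝ) : ℂ)
      + ξ * I * ((seminormA a k ^ 2 : ℝ) : ℂ)‖ * |ξ| ≤ seminormA a h * seminormA a k := by
    rw [henergy, hdiv, norm_div, div_mul_eq_mul_div, div_le_iff₀ hc0, mul_comm (seminormA a h)]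
    exact mul_le_mul
      (norm_integral_mul_conj_le_seminormA ha hk.contDiff.continuous.aestronglyMeasurable hN
        hh.aestronglyMeasurable hhb) hc (abs_nonneg ξ)
      (mul_nonneg (seminormA_nonneg a k) (seminormA_nonneg a h))
  obtain ⟨hβ, hA⟩ := bounds_of_norm_energy_le (seminormA_nonneg a k) (seminormA_nonneg a h) hξ hD
  exact ⟨hA, fun x => by linarith [ha.norm_le_seminormA_add_sqrt hk x]⟩

theorem sqrt_add_integral_norm_sq_le {A B : ℝ} {k : ℝ → ℂ} (hA : √A ≤ B)
    (hk : ∀ x, ‖k x‖ ≤ 2 * B) : √(A + ∫ x in Ioc (0:ℝ) 1, ‖k x‖ ^ 2) ≤ 3 * B := by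
  have hB : 0 ≤ B := (Real.sqrt_nonneg A).trans hA
  have hk2 : ∫ x in Ioc (0:ℝ) 1, ‖k x‖ ^ 2 ≤ (2 * B) ^ 2 := by
    refine (Real.le_norm_self _).trans ?_
    simpa using norm_setIntegral_le_of_norm_le_const (f := fun x => ‖k x‖ ^ 2)
      (measure_Ioc_lt_top (μ := volume) (a := 0) (b := 1)) fun x _ => by
        simpa using pow_le_pow_left₀ (norm_nonneg _) (hk x) 2
  have hA2 := (Real.sqrt_le_iff.1 hA).2
  exact Real.sqrt_le_iff.2 ⟨by positivity, by nlinarith⟩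

/-- there is a constant `C`, independent of `a ∈ 𝒜`, `|ξ| ≥ 1`,
`f` and `g` (with `f` 1-periodic `C¹`, `f'` absolutely continuous, `f'' = a g`
a.e., `g` bounded measurable), such that for any periodic `W^{2,1}` solution
`u` of `-u'' + iξ a u = a f` a.e., the function `k = u - f/(1+iξ)` satisfies
`‖k‖_{H¹} ≤ C |ξ|^{-3/2} [f+g]_a`; moreover, if `∫ a f = 0` then
`‖k‖_∞ ≤ 2 [f+g]_a`.  (Sup-norm bounds are expressed pointwise.) -/
theorem statement_12 :
    ∃ C : ℝ, 0 < C ∧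
      ∀ (a : ℝ → ℝ), MemA a → ∀ (ξ : ℝ), 1 ≤ |ξ| →
      ∀ (f f'' g : ℝ → ℂ),
        (∀ x, f (x + 1) = f x) → (∀ x, f'' (x + 1) = f'' x) →
        ContDiff ℝ 1 f →
        (∀ x, deriv f x = deriv f 0 + ∫ t in (0:ℝ)..x, f'' t) →
        IntegrableOn f'' (Ioc 0 1) →
        (∀ x, g (x + 1) = g x) → Measurable g → (∃ M, ∀ x, ‖g x‖ ≤ M) →
        (∀ᵐ x : ℝ, f'' x = (a x : ℂ) * g x) →
      ∀ (u u'' : ℝ → ℂ), IsPeriodicW21 u u'' →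
      (∀ᵐ x : ℝ,
        -u'' x + (ξ : ℂ) * Complex.I * (a x : ℂ) * u x = (a x : ℂ) * f x) →
      (Real.sqrt
          ((∫ x in Ioc (0:ℝ) 1,
              ‖deriv (fun y => u y - f y / (1 + (ξ : ℂ) * Complex.I)) x‖ ^ 2)
            + (∫ x in Ioc (0:ℝ) 1,
                ‖u x - f x / (1 + (ξ : ℂ) * Complex.I)‖ ^ 2))
        ≤ C * |ξ| ^ (-(3/2 : ℝ)) * seminormA a (fun x => f x + g x)) ∧
      ((∫ x in Ioc (0:ℝ) 1, (a x : ℂ) * f x) = 0 →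
        ∀ x, ‖u x - f x / (1 + (ξ : ℂ) * Complex.I)‖
          ≤ 2 * seminormA a (fun y => f y + g y)) := by
  refine ⟨3, by norm_num, ?_⟩
  intro a ha ξ hξ f f'' g hfper hf''per hfC1 hfrep hf''int _ hgmeas ⟨Mg, hMg⟩ hfg u u'' hu hode
  set c : ℂ := 1 + ξ * I with hc_def
  have hc : |ξ| ≤ ‖c‖ := by simpa [c] using Complex.abs_im_le_norm c
  have hc0 : c ≠ 0 := norm_pos_iff.1 ((one_pos.trans_le hξ).trans_le hc)
  have hf : IsPeriodicW21 f f'' := ⟨hfper, hf''per, hfC1, hfrep, hf''int⟩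
  obtain ⟨Mf, hMf⟩ := hf.exists_bound
  -- `c = 1 + iξ` is what makes the term `a f` cancel: `iξ / c - 1 = -1 / c`.
  have hkode : ∀ᵐ x, u'' x - f'' x / c
      = a x * (ξ * I * (u x - f x / c) - (f x + g x) / c) := by
    filter_upwards [hode, hfg] with x hx hfx
    rw [hfx]
    linear_combination (-1 : ℂ) * hx + a x * f x * (mul_inv_cancel₀ hc0)
      - a x * f x * c⁻¹ * hc_def
  obtain ⟨hA, hsup⟩ := (hu.sub (hf.div_const c)).sqrt_integral_deriv_sq_le_and_norm_le ha hξ hc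
    (h := fun x => f x + g x)
    (hfC1.continuous.measurable.add hgmeas)
    (fun x => (norm_add_le _ _).trans (add_le_add (hMf x) (hMg x))) hkode
  have hτ : |ξ| ^ (-(3/2 : ℝ)) ≤ 1 := Real.rpow_le_one_of_one_le_of_nonpos hξ (by norm_num)
  refine ⟨(sqrt_add_integral_norm_sq_le hA hsup).trans_eq (by ring), fun _ x => (hsup x).trans ?_⟩
  exact mul_le_mul_of_nonneg_left (mul_le_of_le_one_right (seminormA_nonneg _ _) hτ) two_pos.le
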